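/- Let A = (a_{i,j}) ∈ Z^{2×(c+1)} be a degree matrix with a_{2,1} = 0 (so the second row of A deleted along with column 1 gives the first row shifted). Then hp^A(z) = (1 + z + ... + z^{a_{1,1}+a_{2,c+1}-1}) · ∏_{i=2}^c (1 + z + ... + z^{a_{1,i}-1}), and a_{1,1} + a_{2,c+1} = a_{2,1} + a_{1,c+1} = a_{1,c+1}. -/

import Mathlib

open Polynomial

/-- The polynomial `1 + z + ⋯ + z^(d-1)`. -/
noncomputable def geom (d : ℤ) : Polynomial ℤ :=
  ∑ i ∈ Finset.range d.toNat, Polynomial.X ^ i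

/-- The h-polynomial of a standard determinantal ideal with `t × m` degree matrix `A`
(codimension `m - t + 1`), defined via the basic-double-link recursion applied at the
bottom-right entry, with the conventions `hp = 0` for `t = 0` and `hp = 1` for `m < t`. -/
noncomputable def hp : (t m : ℕ) → Matrix (Fin t) (Fin m) ℤ → Polynomial ℤ
  | 0, _, _ => 0
  | _ + 1, 0, _ => 1
  | t + 1, m + 1, A =>
    if m + 1 ≤ t then 1
    else
      Polynomial.X ^ (A (Fin.last t) (Fin.last m)).toNat *
          hp t m (fun i j => A i.castSucc j.castSucc) +
        geom (A (Fin.last t) (Fin.last m)) * hp (t + 1) m (fun i j => A i j.castSucc)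
  termination_by t m => (t, m)

/-- Delete row `k` and column `l` of a matrix. -/
def delRC {t m : ℕ} (A : Matrix (Fin (t + 1)) (Fin (m + 1)) ℤ)
    (k : Fin (t + 1)) (l : Fin (m + 1)) : Matrix (Fin t) (Fin m) ℤ :=
  fun i j => A (k.succAbove i) (l.succAbove j)

/-- Delete column `l` of a matrix. -/
def delC {t m : ℕ} (A : Matrix (Fin t) (Fin (m + 1)) ℤ) (l : Fin (m + 1)) :
    Matrix (Fin t) (Fin m) ℤ :=
  fun i j => A i (l.succAbove j)

/-- `A` is a degree matrix: homogeneous (`a_{i,j} = b_j - a_i`), entries weakly increasing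
left-to-right and bottom-to-top, and positive on the main diagonal. -/
def IsDegreeMatrix {a b : ℕ} (A : Matrix (Fin a) (Fin b) ℤ) : Prop :=
  (∃ (α : Fin a → ℤ) (β : Fin b → ℤ), ∀ i j, A i j = β j - α i) ∧
    (∀ (i : Fin a) (j j' : Fin b), j ≤ j' → A i j ≤ A i j') ∧
    (∀ (i i' : Fin a) (j : Fin b), i ≤ i' → A i' j ≤ A i j) ∧
    (∀ (i : Fin a) (h : (i : ℕ) < b), 0 < A i ⟨i, h⟩)

/-- Binomial coefficient with integer top argument, with the convention that it vanishes
whenever the top argument is negative or smaller than the bottom one. -/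
def ch (a : ℤ) (b : ℕ) : ℤ := if a < 0 then 0 else (a.toNat).choose b

/-- `h : ℕ → ℤ` is a pure O-sequence: it is the f-vector (counting monomials by degree)
of a nonempty finite order ideal of monomials all of whose maximal elements have the
same degree. -/
def IsPureOSequence (h : ℕ → ℤ) : Prop :=
  ∃ (N : ℕ) (Γ : Finset (Fin N → ℕ)),
    Γ.Nonempty ∧
      (∀ μ ∈ Γ, ∀ ν : Fin N → ℕ, ν ≤ μ → ν ∈ Γ) ∧
      (∃ d : ℕ, ∀ μ ∈ Γ, (∀ ν ∈ Γ, μ ≤ ν → μ = ν) → ∑ j, μ j = d) ∧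
      (∀ i : ℕ, ((Γ.filter fun μ => ∑ j, μ j = i).card : ℤ) = h i)

lemma geom_add {a b : ℤ} (ha : 0 ≤ a) (hb : 0 ≤ b) :
    geom (a + b) = X ^ b.toNat * geom a + geom b := by
  rw [geom, geom, geom, show (a + b).toNat = b.toNat + a.toNat by omega,
    Finset.sum_range_add, Finset.mul_sum, add_comm]
  simp only [pow_add]

lemma hp_eq_one_of_lt {t m : ℕ} (A : Matrix (Fin t) (Fin m) ℤ) (h : m < t) : hp t m A = 1 := by
  obtain ⟨t, rfl⟩ : ∃ t', t = t' + 1 := ⟨t - 1, by omega⟩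
  cases m with
  | zero => rw [hp]
  | succ m => rw [hp, if_pos (by omega)]

lemma hp_succ_succ {t m : ℕ} (A : Matrix (Fin (t + 1)) (Fin (m + 1)) ℤ) (h : t ≤ m) :
    hp (t + 1) (m + 1) A =
      X ^ (A (Fin.last t) (Fin.last m)).toNat * hp t m (A.submatrix Fin.castSucc Fin.castSucc) +
        geom (A (Fin.last t) (Fin.last m)) * hp (t + 1) m (A.submatrix id Fin.castSucc) := by
  rw [hp, if_neg (by omega)]
  rfl

lemma hp_one_row {m : ℕ} (B : Matrix (Fin 1) (Fin m) ℤ) : hp 1 m B = ∏ j, geom (B 0 j) := by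
  induction m with
  | zero => exact hp_eq_one_of_lt B Nat.zero_lt_one
  | succ m ih =>
    rw [hp_succ_succ B (Nat.zero_le m), hp.eq_1, ih, Fin.prod_univ_castSucc]
    simp only [Matrix.submatrix_apply, id, Fin.last_zero]
    ring

/-- Since `a_{1,j} = a_{1,1} + a_{2,j}`, each step of the recursion merges its two terms
`z^{a_{2,j}} [a_{1,1}] + [a_{2,j}]` into `[a_{1,j}]`, where `[d] = 1 + z + ⋯ + z^{d-1}`. -/
lemma hp_two_rows_of_row_shift {m : ℕ} (A : Matrix (Fin 2) (Fin (m + 1)) ℤ)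
    (hshift : ∀ j, A 1 j = A 0 j - A 0 0) (h00 : 0 ≤ A 0 0) (hmono : ∀ j, A 0 0 ≤ A 0 j) :
    hp 2 (m + 1) A = ∏ j : Fin m, geom (A 0 j.succ) := by
  induction m with
  | zero => exact hp_eq_one_of_lt A (by omega)
  | succ m ih =>
    have hmerge : geom (A 0 (Fin.last (m + 1))) =
        X ^ (A 1 (Fin.last (m + 1))).toNat * geom (A 0 0) + geom (A 1 (Fin.last (m + 1))) := by
      rw [← geom_add h00 (by linarith [hshift (Fin.last (m + 1)), hmono (Fin.last (m + 1))]),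
        hshift, add_sub_cancel]
    rw [hp_succ_succ (t := 1) A (by omega), hp_one_row, Fin.prod_univ_succ,
      ih _ (fun j => hshift _) h00 (fun j => hmono _), Fin.prod_univ_castSucc, Fin.succ_last, hmerge]
    simp only [Matrix.submatrix_apply, id, Fin.castSucc_zero, Fin.succ_castSucc, Fin.reduceLast]
    ring

lemma Fin.prod_succ_eq_mul_prod_Ioo {M : Type*} [CommMonoid M] {n : ℕ} (f : Fin (n + 2) → M) :
    ∏ j : Fin (n + 1), f j.succ =
      f (Fin.last (n + 1)) * ∏ j ∈ Finset.Ioo 0 (Fin.last (n + 1)), f j := by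
  rw [← Fin.prod_Ioi_zero, ← Finset.prod_insert Finset.right_notMem_Ioo,
    Finset.Ioo_insert_right Fin.last_pos, Finset.Ioi_eq_Ioc, Fin.top_eq_last]

/-- For a degree matrix `A ∈ ℤ^{2×(c+2)}` (so of codimension `c+1`) with `a_{2,1} = 0`:
`hp^A(z) = (1 + z + ⋯ + z^{a_{1,1}+a_{2,c+2}-1}) · ∏_{j=2}^{c+1} (1 + z + ⋯ + z^{a_{1,j}-1})`,
and `a_{1,1} + a_{2,c+2} = a_{2,1} + a_{1,c+2} = a_{1,c+2}`. -/
theorem hp_two_rows_a21_zero (c : ℕ) (A : Matrix (Fin 2) (Fin (c + 2)) ℤ)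
    (hA : IsDegreeMatrix A) (h21 : A 1 0 = 0) :
    hp 2 (c + 2) A =
        geom (A 0 0 + A 1 (Fin.last (c + 1))) *
          ∏ j ∈ Finset.Ioo (0 : Fin (c + 2)) (Fin.last (c + 1)), geom (A 0 j) ∧
      A 0 0 + A 1 (Fin.last (c + 1)) = A 0 (Fin.last (c + 1)) := by
  obtain ⟨⟨α, β, hαβ⟩, hrow, -, hdiag⟩ := hA
  have hshift : ∀ j, A 1 j = A 0 j - A 0 0 := fun j => by
    have hβα : β 0 = α 1 := by linarith [hαβ 1 0]
    rw [hαβ 1 j, hαβ 0 j, hαβ 0 0, hβα]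
    ring
  have hlast : A 0 0 + A 1 (Fin.last (c + 1)) = A 0 (Fin.last (c + 1)) := by
    rw [hshift]; ring
  refine ⟨?_, hlast⟩
  rw [hlast, hp_two_rows_of_row_shift A hshift (hdiag 0 (by omega)).le
    (fun j => hrow 0 0 j (Fin.zero_le j))]
  exact Fin.prod_succ_eq_mul_prod_Ioo fun j => geom (A 0 j)
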